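/- arXiv:1904.00934 — 2 statements merged into one kernel-verified Lean document; each statement's English description precedes it below -/
import Mathlib

section
/- Fix k ≥ 1 and let q(x̄), q'(x̄'), q''(x̄'') be CQs with q'' ∈ GHW(k), where x̄ and x̄' have the same length, and let (q' ∧ q)(z̄) be the disjoint conjunction of q' and q. If (q, x̄) →_k (q', x̄'), then (q'', x̄'') → (q' ∧ q, z̄) implies (q'', x̄'') → (q', x̄'). -/
/-!
Common formalization of relational databases, conjunctive queries (CQs),
generalized hypertreewidth, existential cover (pebble) games, and
approximations of CQs, following Barceló, Romero, Zeume,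
"A More General Theory of Static Approximations for Conjunctive Queries".
-/

/-- A relational schema: a finite set of relation symbols, each with an arity. -/
structure Schema where
  Rel : Type
  rel_finite : Finite Rel
  arity : Rel → ℕ

/-- A fact (atom) over schema `σ`, with arguments (constants/variables) from `α`. -/
structure Atom (σ : Schema) (α : Type) where
  rel : σ.Rel
  args : Fin (σ.arity rel) → α

/-- A database instance over `σ` with elements from `α`: a set of facts.
    (Finiteness or countability is imposed separately where needed.) -/
abbrev DB (σ : Schema) (α : Type) := Set (Atom σ α)

/-- Applying a map on elements to a fact. -/
def Atom.map {σ : Schema} {α β : Type} (h : α → β) (f : Atom σ α) : Atom σ β :=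
  ⟨f.rel, fun i => h (f.args i)⟩

/-- `h` is a homomorphism from `D` to `D'`. -/
def IsHom {σ : Schema} {α β : Type} (h : α → β) (D : DB σ α) (D' : DB σ β) : Prop :=
  ∀ f ∈ D, f.map h ∈ D'

/-- `(D, a) → (D', b)`: there is a homomorphism from `D` to `D'` mapping `a` to `b`. -/
def HomTup {σ : Schema} {α β : Type} {n : ℕ} (D : DB σ α) (a : Fin n → α)
    (D' : DB σ β) (b : Fin n → β) : Prop :=
  ∃ h : α → β, IsHom h D D' ∧ ∀ i, h (a i) = b i

/-- The active domain of a database: the elements appearing in its facts. -/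
def adom {σ : Schema} {α : Type} (D : DB σ α) : Set α :=
  ⋃ f ∈ D, Set.range f.args

/-- A tree decomposition of a set of atoms `A` with respect to the set `E` of
    existentially quantified variables: a (possibly infinite) tree `T` together
    with bags `bag t ⊆ E` such that the existential variables of every atom are
    contained in some bag, and for every existential variable the set of nodes
    whose bag contains it induces a connected subtree. -/
structure TreeDecomp {σ : Schema} {V : Type} (A : DB σ V) (E : Set V) where
  node : Type
  T : SimpleGraph node
  isTree : T.IsTree
  bag : node → Set V
  bag_sub : ∀ t, bag t ⊆ E
  covers : ∀ f ∈ A, ∃ t, Set.range f.args ∩ E ⊆ bag t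
  conn : ∀ y ∈ E, (SimpleGraph.induce {t | y ∈ bag t} T).Connected

/-- The decomposition has width at most `k`: every bag is covered by at most
    `k` atoms of `A`. -/
def TreeDecomp.widthLE {σ : Schema} {V : Type} {A : DB σ V} {E : Set V}
    (td : TreeDecomp A E) (k : ℕ) : Prop :=
  ∀ t, ∃ S : Finset (Atom σ V), ↑S ⊆ A ∧ S.card ≤ k ∧
    td.bag t ⊆ ⋃ f ∈ (S : Set (Atom σ V)), Set.range f.args

/-- The atoms `A` (with existential variables `E`) have generalized
    hypertreewidth at most `k`. -/
def ghwAuxLE {σ : Schema} {V : Type} (A : DB σ V) (E : Set V) (k : ℕ) : Prop :=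
  ∃ td : TreeDecomp A E, td.widthLE k

/-- A conjunctive query over `σ` with `n` free variables: a finite set of atoms
    over a type of variables, together with the tuple of free variables.
    Its canonical database is `atoms`. -/
structure CQ (σ : Schema) (n : ℕ) where
  Var : Type
  atoms : DB σ Var
  free : Fin n → Var
  finAtoms : atoms.Finite

namespace CQ

variable {σ : Schema} {n : ℕ}

/-- The existentially quantified variables of a CQ: variables occurring in its
    atoms that are not free. -/
def existVars (q : CQ σ n) : Set q.Var := adom q.atoms \ Set.range q.free

/-- `q` has generalized hypertreewidth at most `k`, i.e. `q ∈ GHW(k)`. -/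
def ghwLE (q : CQ σ n) (k : ℕ) : Prop := ghwAuxLE q.atoms q.existVars k

/-- The result of evaluating `q` over a database `D` (with constants from `ℕ`):
    all tuples of elements of `D` to which the canonical database of `q` maps
    homomorphically (sending the free variables to the tuple). -/
def eval (q : CQ σ n) (D : DB σ ℕ) : Set (Fin n → ℕ) :=
  {a | (∀ i, a i ∈ adom D) ∧ HomTup q.atoms q.free D a}

/-- Containment of CQs: `q ⊆ q'`, i.e. `q(D) ⊆ q'(D)` for every (finite) database. -/
def le (q q' : CQ σ n) : Prop :=
  ∀ D : DB σ ℕ, D.Finite → q.eval D ⊆ q'.eval D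

/-- Equivalence of CQs: mutual containment. -/
def equiv (q q' : CQ σ n) : Prop := q.le q' ∧ q'.le q

end CQ

/-- `q'` is a `GHW(k)`-overapproximation of `q`: `q' ∈ GHW(k)`, `q ⊆ q'`, and
    there is no `q'' ∈ GHW(k)` with `q ⊆ q'' ⊆ q'` and `q'' ≢ q'`. -/
def IsOverapprox {σ : Schema} {n : ℕ} (k : ℕ) (q q' : CQ σ n) : Prop :=
  q'.ghwLE k ∧ q.le q' ∧
    ¬ ∃ q'' : CQ σ n, q''.ghwLE k ∧ q.le q'' ∧ q''.le q' ∧ ¬ q''.equiv q'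

/-- `q'` is a `GHW(k)`-underapproximation of `q`: `q' ∈ GHW(k)`, `q' ⊆ q`, and
    there is no `q'' ∈ GHW(k)` with `q' ⊆ q'' ⊆ q` and `q'' ≢ q'`. -/
def IsUnderapprox {σ : Schema} {n : ℕ} (k : ℕ) (q q' : CQ σ n) : Prop :=
  q'.ghwLE k ∧ q'.le q ∧
    ¬ ∃ q'' : CQ σ n, q''.ghwLE k ∧ q'.le q'' ∧ q''.le q ∧ ¬ q''.equiv q'

/-- `q' ⊑_q q''`: the symmetric difference of `q''` and `q` is contained in the
    symmetric difference of `q'` and `q`, over every (finite) database. -/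
def deltaLE {σ : Schema} {n : ℕ} (q q' q'' : CQ σ n) : Prop :=
  ∀ D : DB σ ℕ, D.Finite →
    symmDiff (q.eval D) (q''.eval D) ⊆ symmDiff (q.eval D) (q'.eval D)

/-- `q'` is a `GHW(k)`-Δ-approximation of `q`: `q' ∈ GHW(k)` and `q'` is maximal
    with respect to the partial order `⊑_q` on `GHW(k)`. -/
def IsDeltaApprox {σ : Schema} {n : ℕ} (k : ℕ) (q q' : CQ σ n) : Prop :=
  q'.ghwLE k ∧
    ¬ ∃ q'' : CQ σ n, q''.ghwLE k ∧ deltaLE q q' q'' ∧ ¬ deltaLE q q'' q'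

/-- `U` is covered by at most `k` atoms of `D`. -/
def kCovered {σ : Schema} {α : Type} (k : ℕ) (D : DB σ α) (U : Set α) : Prop :=
  ∃ S : Finset (Atom σ α), ↑S ⊆ D ∧ S.card ≤ k ∧
    U ⊆ ⋃ f ∈ (S : Set (Atom σ α)), Set.range f.args

/-- `U` is a `k`-union of `D`: the union of the element sets of at most `k`
    atoms of `D`. -/
def kUnion {σ : Schema} {α : Type} (k : ℕ) (D : DB σ α) (U : Set α) : Prop :=
  ∃ S : Finset (Atom σ α), ↑S ⊆ D ∧ S.card ≤ k ∧
    U = ⋃ f ∈ (S : Set (Atom σ α)), Set.range f.args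

/-- The map `h` on the pebbled set `U`, extended by `a ↦ b` on the distinguished
    tuples, is a partial homomorphism from `D` to `D'`: `h` sends `a` to `b` and
    every fact of `D` whose elements lie in `U ∪ range a` to a fact of `D'`. -/
def PartialOk {σ : Schema} {α β : Type} {n : ℕ} (D : DB σ α) (D' : DB σ β)
    (a : Fin n → α) (b : Fin n → β) (U : Set α) (h : α → β) : Prop :=
  (∀ i, h (a i) = b i) ∧
  ∀ f ∈ D, Set.range f.args ⊆ U ∪ Set.range a → f.map h ∈ D'

/-- `(D, a) →_k (D', b)`: Duplicator has a winning strategy in the existential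
    `k`-cover game on `(D, a)` and `(D', b)`, presented as a nonempty family of
    positions (pebbled set + partial homomorphism) that is closed under
    Spoiler placing a pebble (provided the pebbled elements stay covered by at
    most `k` atoms of `D`) and under removing pebbles. -/
def PebbleWin {σ : Schema} {α β : Type} {n : ℕ} (k : ℕ) (D : DB σ α) (a : Fin n → α)
    (D' : DB σ β) (b : Fin n → β) : Prop :=
  ∃ F : Set (Set α × (α → β)),
    (∃ h, (∅, h) ∈ F) ∧
    (∀ p ∈ F, kCovered k D p.1 ∧ PartialOk D D' a b p.1 p.2) ∧
    (∀ p ∈ F, ∀ c : α, kCovered k D (insert c p.1) →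
      ∃ p' ∈ F, p'.1 = insert c p.1 ∧ ∀ x ∈ p.1, p'.2 x = p.2 x) ∧
    (∀ p ∈ F, ∀ U, U ⊆ p.1 → ∃ p' ∈ F, p'.1 = U ∧ ∀ x ∈ U, p'.2 x = p.2 x)

/-- Duplicator can survive `c` more rounds of the compact existential `k`-cover
    game from the position with pebbled set `U` and partial map `h`: whatever
    `k`-union `U'` Spoiler plays next, Duplicator has a consistent partial
    homomorphism on `U'` from which she can survive `c - 1` more rounds. -/
def WinRounds {σ : Schema} {α β : Type} {n : ℕ} (k : ℕ) (D : DB σ α) (a : Fin n → α)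
    (D' : DB σ β) (b : Fin n → β) : ℕ → Set α → (α → β) → Prop
  | 0, _, _ => True
  | c + 1, U, h => ∀ U', kUnion k D U' →
      ∃ h', (∀ x ∈ U ∩ U', h' x = h x) ∧ PartialOk D D' a b U' h' ∧
        WinRounds k D a D' b c U' h'

/-- `(D, a) →_k^c (D', b)`: Duplicator has a winning strategy in the first `c`
    rounds of the compact existential `k`-cover game on `(D, a)` and `(D', b)`. -/
def PebbleWinC {σ : Schema} {α β : Type} {n : ℕ} (k c : ℕ) (D : DB σ α) (a : Fin n → α)
    (D' : DB σ β) (b : Fin n → β) : Prop :=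
  ∃ h0, PartialOk D D' a b ∅ h0 ∧ WinRounds k D a D' b c ∅ h0

/-- The Gaifman graph of a set of atoms `A`: vertices are elements, with an edge
    between two distinct elements that occur together in some atom of `A`. -/
def gaifmanOf {σ : Schema} {V : Type} (A : DB σ V) : SimpleGraph V where
  Adj z z' := z ≠ z' ∧ ∃ f ∈ A, z ∈ Set.range f.args ∧ z' ∈ Set.range f.args
  symm := by
    constructor
    rintro z z' ⟨hne, f, hf, hz, hz'⟩
    exact ⟨hne.symm, f, hf, hz', hz⟩
  loopless := by
    constructor
    rintro z ⟨hne, -⟩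
    exact hne rfl

/-- A Boolean CQ is connected if its Gaifman graph (on the variables occurring
    in it) is connected. -/
def CQ.IsConnected {σ : Schema} (q : CQ σ 0) : Prop :=
  (SimpleGraph.induce (adom q.atoms) (gaifmanOf q.atoms)).Connected

/-- `q` is a core: no CQ with fewer atoms is (homomorphically) equivalent to it. -/
def IsCore {σ : Schema} {n : ℕ} (q : CQ σ n) : Prop :=
  ∀ q' : CQ σ n, HomTup q.atoms q.free q'.atoms q'.free →
    HomTup q'.atoms q'.free q.atoms q.free →
    q.atoms.ncard ≤ q'.atoms.ncard

/-- The identifications made in the disjoint conjunction: the `i`-th free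
variable of `q'` is identified with the `i`-th free variable of `q`. -/
def djRel {σ : Schema} {n : ℕ} (q' q : CQ σ n) :
    (q'.Var ⊕ q.Var) → (q'.Var ⊕ q.Var) → Prop :=
  fun a b => ∃ i : Fin n, a = Sum.inl (q'.free i) ∧ b = Sum.inr (q.free i)

/-- The disjoint conjunction `(q' ∧ q)(z̄)`: rename the variables of `q'` and
`q` apart, take the conjunction of all atoms of both, and identify the `i`-th
free variable of `q'` with the `i`-th free variable of `q`. -/
def disjConj {σ : Schema} {n : ℕ} (q' q : CQ σ n) : CQ σ n where
  Var := Quot (djRel q' q)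
  atoms := (Atom.map (fun v => Quot.mk (djRel q' q) (Sum.inl v)) '' q'.atoms) ∪
           (Atom.map (fun v => Quot.mk (djRel q' q) (Sum.inr v)) '' q.atoms)
  free := fun i => Quot.mk (djRel q' q) (Sum.inl (q'.free i))
  finAtoms := (q'.finAtoms.image _).union (q.finAtoms.image _)


section TreeGlue

variable {ν P : Type}

/-- From a walk in an induced subgraph, get a walk in the ambient graph whose
support stays in the inducing set. -/
lemma exists_walk_of_induce_walk (T : SimpleGraph ν) (s : Set ν) :
    ∀ {a b : s} (_ : (SimpleGraph.induce s T).Walk a b),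
      ∃ w : T.Walk a.1 b.1, ∀ x ∈ w.support, x ∈ s := by
  intro a b w
  induction w with
  | nil => exact ⟨SimpleGraph.Walk.nil, by simp⟩
  | @cons x y z h _ ih =>
    obtain ⟨w', hw'⟩ := ih
    exact ⟨SimpleGraph.Walk.cons h w', by
      intro u hu
      rcases List.mem_cons.mp (hu : u ∈ (x : ν) :: w'.support) with h1 | h2
      · exact h1 ▸ x.2
      · exact hw' u h2⟩

/-- A walk from outside a set to inside crosses an edge. -/
lemma exists_crossing_edge (T : SimpleGraph ν) (A : Set ν) :
    ∀ {x y : ν} (_ : T.Walk x y) (_ : x ∉ A) (_ : y ∈ A),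
      ∃ u v, T.Adj u v ∧ u ∉ A ∧ v ∈ A := by
  intro x y w
  induction w with
  | nil => intro hx hy; exact absurd hy hx
  | @cons x z y h w ih =>
    intro hx hy
    by_cases hz : z ∈ A
    · exact ⟨x, z, h, hx, hz⟩
    · exact ih hz hy

/-- In an acyclic graph, a vertex outside a "walk-connected" set cannot have
two distinct neighbours inside it. -/
lemma acyclic_unique_neighbor (T : SimpleGraph ν) (hT : T.IsAcyclic) (A : Set ν)
    (hconn : ∀ x ∈ A, ∀ y ∈ A, ∃ w : T.Walk x y, ∀ s ∈ w.support, s ∈ A)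
    {u a b : ν} (hu : u ∉ A) (ha : a ∈ A) (hb : b ∈ A)
    (hua : T.Adj u a) (hub : T.Adj u b) : a = b := by
  classical
  by_contra hne
  obtain ⟨w, hw⟩ := hconn a ha b hb
  have hup : u ∉ w.toPath.1.support := fun hmem =>
    hu (hw u (SimpleGraph.Walk.support_toPath_subset w hmem))
  have hpath : (SimpleGraph.Walk.cons hua w.toPath.1).IsPath := by
    rw [SimpleGraph.Walk.cons_isPath_iff]
    exact ⟨w.toPath.2, hup⟩
  have := SimpleGraph.isAcyclic_iff_path_unique.mp hT
    ⟨SimpleGraph.Walk.cons hua w.toPath.1, hpath⟩ (SimpleGraph.Path.singleton hub)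
  have hlen := congrArg (fun p : T.Path u b => p.1.length) this
  simp [SimpleGraph.Path.singleton] at hlen
  exact hne (SimpleGraph.Walk.Nil.eq hlen)

/-- Gluing positions along a tree. -/
lemma tree_glue (T : SimpleGraph ν) (hT : T.IsTree) (S : ν → Set P)
    (C : ν → ν → P → P → Prop)
    (hsymm : ∀ t t' p p', C t t' p p' → C t' t p' p)
    (hne : ∀ t, (S t).Nonempty)
    (hstep : ∀ t t', T.Adj t t' → ∀ p ∈ S t, ∃ p' ∈ S t', C t t' p p') :
    ∃ g : ν → P, (∀ t, g t ∈ S t) ∧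
      ∀ t t', T.Adj t t' → C t t' (g t) (g t') := by
  classical
  have hνne : Nonempty ν := hT.isConnected.nonempty
  obtain ⟨r⟩ := hνne
  obtain ⟨pr, hpr⟩ := hne r
  let dom : Set (ν × P) → Set ν := fun E => {x | ∃ p, (x, p) ∈ E}
  let Good : Set (Set (ν × P)) := {E |
    (∀ x p1 p2, (x, p1) ∈ E → (x, p2) ∈ E → p1 = p2) ∧
    (∀ x p, (x, p) ∈ E → p ∈ S x) ∧
    r ∈ dom E ∧
    (∀ x ∈ dom E, ∀ y ∈ dom E, ∃ w : T.Walk x y, ∀ s ∈ w.support, s ∈ dom E) ∧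
    (∀ x y p1 p2, (x, p1) ∈ E → (y, p2) ∈ E → T.Adj x y → C x y p1 p2)}
  have hstart : ({((r : ν), pr)} : Set (ν × P)) ∈ Good := by
    refine ⟨?_, ?_, ⟨pr, rfl⟩, ?_, ?_⟩
    · rintro x p1 p2 h1 h2
      rw [Set.mem_singleton_iff, Prod.mk.injEq] at h1 h2
      rw [h1.2, h2.2]
    · rintro x p h1
      rw [Set.mem_singleton_iff, Prod.mk.injEq] at h1
      obtain ⟨rfl, rfl⟩ := h1
      exact hpr
    · rintro x ⟨p, hx⟩ y ⟨p', hy⟩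
      rw [Set.mem_singleton_iff, Prod.mk.injEq] at hx hy
      obtain ⟨hx1, hx2⟩ := hx
      obtain ⟨hy1, hy2⟩ := hy
      subst hx1; subst hy1; subst hx2
      refine ⟨SimpleGraph.Walk.nil, ?_⟩
      intro s hs
      simp only [SimpleGraph.Walk.support_nil, List.mem_singleton] at hs
      exact ⟨p, by simp [hs]⟩
    · rintro x y p1 p2 h1 h2 hadj
      rw [Set.mem_singleton_iff, Prod.mk.injEq] at h1 h2
      rw [h1.1, h2.1] at hadj
      exact absurd hadj (T.irrefl)
  have hchains : ∀ c ⊆ Good, IsChain (· ⊆ ·) c → c.Nonempty →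
      ∃ ub ∈ Good, ∀ s ∈ c, s ⊆ ub := by
    intro c hcG hchain hcne
    obtain ⟨E0, hE0⟩ := hcne
    refine ⟨⋃₀ c, ⟨?_, ?_, ?_, ?_, ?_⟩, fun s hs => Set.subset_sUnion_of_mem hs⟩
    · rintro x p1 p2 ⟨E1, hE1, h1⟩ ⟨E2, hE2, h2⟩
      rcases hchain.total hE1 hE2 with h | h
      · exact (hcG hE2).1 x p1 p2 (h h1) h2
      · exact (hcG hE1).1 x p1 p2 h1 (h h2)
    · rintro x p ⟨E1, hE1, h1⟩
      exact (hcG hE1).2.1 x p h1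
    · obtain ⟨p, hp⟩ := (hcG hE0).2.2.1
      exact ⟨p, E0, hE0, hp⟩
    · rintro x ⟨p, E1, hE1, h1⟩ y ⟨p', E2, hE2, h2⟩
      rcases hchain.total hE1 hE2 with h | h
      · obtain ⟨w, hw⟩ := (hcG hE2).2.2.2.1 x ⟨p, h h1⟩ y ⟨p', h2⟩
        exact ⟨w, fun s hs => by
          obtain ⟨ps, hps⟩ := hw s hs; exact ⟨ps, E2, hE2, hps⟩⟩
      · obtain ⟨w, hw⟩ := (hcG hE1).2.2.2.1 x ⟨p, h1⟩ y ⟨p', h h2⟩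
        exact ⟨w, fun s hs => by
          obtain ⟨ps, hps⟩ := hw s hs; exact ⟨ps, E1, hE1, hps⟩⟩
    · rintro x y p1 p2 ⟨E1, hE1, h1⟩ ⟨E2, hE2, h2⟩ hadj
      rcases hchain.total hE1 hE2 with h | h
      · exact (hcG hE2).2.2.2.2 x y p1 p2 (h h1) h2 hadj
      · exact (hcG hE1).2.2.2.2 x y p1 p2 h1 (h h2) hadj
  obtain ⟨M, -, hMmax⟩ := zorn_subset_nonempty Good hchains _ hstart
  have hMG : M ∈ Good := hMmax.prop
  have htotal : ∀ t : ν, t ∈ dom M := by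
    by_contra hnt
    push_neg at hnt
    obtain ⟨x0, hx0⟩ := hnt
    obtain ⟨w⟩ := hT.isConnected x0 r
    obtain ⟨u, v, huv, hu, hv⟩ := exists_crossing_edge T (dom M) w hx0 hMG.2.2.1
    obtain ⟨pv, hpv⟩ := hv
    have hvdom : v ∈ dom M := ⟨pv, hpv⟩
    obtain ⟨pu, hpuS, hpuC⟩ := hstep v u huv.symm pv ((hMG.2.1) v pv hpv)
    have hM' : insert ((u : ν), pu) M ∈ Good := by
      refine ⟨?_, ?_, ?_, ?_, ?_⟩
      · rintro x p1 p2 h1 h2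
        rcases Set.mem_insert_iff.mp h1 with h1 | h1 <;>
          rcases Set.mem_insert_iff.mp h2 with h2 | h2
        · rw [Prod.mk.injEq] at h1 h2
          rw [h1.2, h2.2]
        · rw [Prod.mk.injEq] at h1
          exact absurd ⟨p2, h1.1 ▸ h2⟩ hu
        · rw [Prod.mk.injEq] at h2
          exact absurd ⟨p1, h2.1 ▸ h1⟩ hu
        · exact hMG.1 x p1 p2 h1 h2
      · rintro x p h1
        rcases Set.mem_insert_iff.mp h1 with h1 | h1
        · rw [Prod.mk.injEq] at h1
          obtain ⟨rfl, rfl⟩ := h1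
          exact hpuS
        · exact hMG.2.1 x p h1
      · obtain ⟨p, hp⟩ := hMG.2.2.1
        exact ⟨p, Set.mem_insert_iff.mpr (Or.inr hp)⟩
      · have hdomins : dom (insert ((u : ν), pu) M) = insert u (dom M) := by
          ext z
          constructor
          · rintro ⟨p, hp⟩
            rcases Set.mem_insert_iff.mp hp with h | h
            · left; exact congrArg Prod.fst h
            · right; exact ⟨p, h⟩
          · rintro (rfl | ⟨p, hp⟩)
            · exact ⟨pu, Set.mem_insert _ _⟩
            · exact ⟨p, Set.mem_insert_iff.mpr (Or.inr hp)⟩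
        rw [hdomins]
        have key : ∀ z ∈ dom M, ∃ w : T.Walk u z, ∀ s ∈ w.support, s ∈ insert u (dom M) := by
          intro z hz
          obtain ⟨w, hw⟩ := hMG.2.2.2.1 v hvdom z hz
          refine ⟨SimpleGraph.Walk.cons huv w, ?_⟩
          intro s hs
          rcases List.mem_cons.mp (by simpa using hs) with h | h
          · exact h ▸ Set.mem_insert _ _
          · exact Set.mem_insert_iff.mpr (Or.inr (hw s h))
        rintro x hx y hy
        rcases Set.mem_insert_iff.mp hx with hxu | hx2
        · rcases Set.mem_insert_iff.mp hy with hyu | hy2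
          · subst hxu; subst hyu
            refine ⟨SimpleGraph.Walk.nil, ?_⟩
            intro s hs
            simp only [SimpleGraph.Walk.support_nil, List.mem_singleton] at hs
            exact hs ▸ Set.mem_insert _ _
          · subst hxu
            exact key y hy2
        · rcases Set.mem_insert_iff.mp hy with hyu | hy2
          · subst hyu
            obtain ⟨w, hw⟩ := key x hx2
            refine ⟨w.reverse, ?_⟩
            intro s hs
            rw [SimpleGraph.Walk.support_reverse, List.mem_reverse] at hs
            exact hw s hs
          · obtain ⟨w, hw⟩ := hMG.2.2.2.1 x hx2 y hy2
            exact ⟨w, fun s hs => Set.mem_insert_iff.mpr (Or.inr (hw s hs))⟩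
      · rintro x y p1 p2 h1 h2 hadj
        rcases Set.mem_insert_iff.mp h1 with h1e | h1m
        · rcases Set.mem_insert_iff.mp h2 with h2e | h2m
          · rw [Prod.mk.injEq] at h1e h2e
            rw [h1e.1, h2e.1] at hadj
            exact absurd hadj (T.irrefl)
          · rw [Prod.mk.injEq] at h1e
            obtain ⟨hxu, hp1u⟩ := h1e
            subst hxu; subst hp1u
            have hy : y ∈ dom M := ⟨p2, h2m⟩
            have hyv : y = v := acyclic_unique_neighbor T hT.IsAcyclic (dom M)
              hMG.2.2.2.1 hu hy hvdom hadj huv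
            subst hyv
            have hp2 : p2 = pv := hMG.1 y p2 pv h2m hpv
            subst hp2
            exact hsymm _ _ _ _ hpuC
        · rcases Set.mem_insert_iff.mp h2 with h2e | h2m
          · rw [Prod.mk.injEq] at h2e
            obtain ⟨hyu, hp2u⟩ := h2e
            subst hyu; subst hp2u
            have hx : x ∈ dom M := ⟨p1, h1m⟩
            have hxv : x = v := acyclic_unique_neighbor T hT.IsAcyclic (dom M)
              hMG.2.2.2.1 hu hx hvdom hadj.symm huv
            subst hxv
            have hp1 : p1 = pv := hMG.1 x p1 pv h1m hpv
            subst hp1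
            exact hpuC
          · exact hMG.2.2.2.2 x y p1 p2 h1m h2m hadj
    have heq : insert ((u : ν), pu) M ⊆ M :=
      hMmax.2 hM' (Set.subset_insert _ _)
    exact hu ⟨pu, heq (Set.mem_insert _ _)⟩
  choose gp hgp using htotal
  refine ⟨gp, fun t => hMG.2.1 t (gp t) (hgp t), fun t t' hadj =>
    hMG.2.2.2.2 t t' (gp t) (gp t') (hgp t) (hgp t') hadj⟩

end TreeGlue

section GameAux

lemma kCovered_mono {σ : Schema} {α : Type} {k : ℕ} {D : DB σ α} {U U' : Set α}
    (h : U' ⊆ U) (hU : kCovered k D U) : kCovered k D U' := by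
  obtain ⟨S, h1, h2, h3⟩ := hU
  exact ⟨S, h1, h2, h.trans h3⟩

lemma pebble_extend {σ : Schema} {α β : Type} {k : ℕ} {D : DB σ α}
    {F : Set (Set α × (α → β))}
    (hIns : ∀ p ∈ F, ∀ c : α, kCovered k D (insert c p.1) →
      ∃ p' ∈ F, p'.1 = insert c p.1 ∧ ∀ x ∈ p.1, p'.2 x = p.2 x)
    (U : Set α) (hU : kCovered k D U) (W : Finset α) :
    ↑W ⊆ U → ∀ p ∈ F, p.1 ⊆ U →
      ∃ p' ∈ F, p'.1 = p.1 ∪ ↑W ∧ ∀ x ∈ p.1, p'.2 x = p.2 x := by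
  classical
  induction W using Finset.induction_on with
  | empty =>
    intro _ p hp hsub
    exact ⟨p, hp, by simp, fun x _ => rfl⟩
  | @insert c W hc ih =>
    intro hW p hp hsub
    have hWU : (W : Set α) ⊆ U := fun x hx => hW (by simp [hx])
    obtain ⟨p1, hp1F, hp1eq, hp1ag⟩ := ih hWU p hp hsub
    have hcov : kCovered k D (insert c p1.1) := by
      refine kCovered_mono ?_ hU
      rw [hp1eq]
      intro x hx
      rcases Set.mem_insert_iff.mp hx with rfl | hx
      · exact hW (by simp)
      · rcases hx with hx | hx
        · exact hsub hx
        · exact hWU hx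
    obtain ⟨p2, hp2F, hp2eq, hp2ag⟩ := hIns p1 hp1F c hcov
    refine ⟨p2, hp2F, ?_, ?_⟩
    · rw [hp2eq, hp1eq]
      ext x
      simp only [Set.mem_insert_iff, Set.mem_union, Finset.coe_insert]
      tauto
    · intro x hx
      have hx1 : x ∈ p1.1 := by rw [hp1eq]; exact Or.inl hx
      exact (hp2ag x hx1).trans (hp1ag x hx)

end GameAux

section QuotAux

lemma djRel_inr_inl {σ : Schema} {n : ℕ} (q' q : CQ σ n) (u : q.Var) (w : q'.Var)
    (h : Quot.mk (djRel q' q) (Sum.inr u) = Quot.mk (djRel q' q) (Sum.inl w)) :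
    u ∈ Set.range q.free := by
  have hresp : ∀ a b, djRel q' q a b →
      Sum.elim (fun _ => True) (fun x => x ∈ Set.range q.free) a =
      Sum.elim (fun _ => True) (fun x => x ∈ Set.range q.free) b := by
    rintro a b ⟨i, rfl, rfl⟩
    simp only [Sum.elim_inl, Sum.elim_inr]
    exact propext (iff_of_true trivial (Set.mem_range_self i))
  have hc := congrArg
    (Quot.lift (Sum.elim (fun _ => True) (fun x => x ∈ Set.range q.free)) hresp) h
  simp only [Sum.elim_inl, Sum.elim_inr] at hc
  exact of_eq_true hc

lemma djRel_inr_inr {σ : Schema} {n : ℕ} (q' q : CQ σ n) (u u' : q.Var)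
    (hu : u ∉ Set.range q.free)
    (h : Quot.mk (djRel q' q) (Sum.inr u) = Quot.mk (djRel q' q) (Sum.inr u')) :
    u = u' := by
  classical
  have hresp : ∀ a b, djRel q' q a b →
      Sum.elim (fun _ => (none : Option q.Var))
        (fun x => if x ∈ Set.range q.free then none else some x) a =
      Sum.elim (fun _ => (none : Option q.Var))
        (fun x => if x ∈ Set.range q.free then none else some x) b := by
    rintro a b ⟨i, rfl, rfl⟩
    simp only [Sum.elim_inl, Sum.elim_inr]
    rw [if_pos (Set.mem_range_self i)]
  have hc := congrArg
    (Quot.lift (Sum.elim (fun _ => (none : Option q.Var))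
      (fun x => if x ∈ Set.range q.free then none else some x)) hresp) h
  simp only [Sum.elim_inl, Sum.elim_inr] at hc
  rw [if_neg hu] at hc
  by_cases h' : u' ∈ Set.range q.free
  · rw [if_pos h'] at hc
    exact absurd hc (by simp)
  · rw [if_neg h'] at hc
    exact Option.some.inj hc

lemma atom_map_eq {σ : Schema} {α β γ : Type} {h1 : α → γ} {h2 : β → γ}
    {f1 : Atom σ α} {f2 : Atom σ β} (h : Atom.map h1 f1 = Atom.map h2 f2) :
    ∃ (R : σ.Rel) (a1 : Fin (σ.arity R) → α) (a2 : Fin (σ.arity R) → β),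
      f1 = ⟨R, a1⟩ ∧ f2 = ⟨R, a2⟩ ∧ ∀ m, h1 (a1 m) = h2 (a2 m) := by
  obtain ⟨R1, a1⟩ := f1
  obtain ⟨R2, a2⟩ := f2
  simp only [Atom.map] at h
  injection h with hR hargs
  subst hR
  exact ⟨R1, a1, a2, rfl, rfl, congrFun (eq_of_heq hargs)⟩

end QuotAux
/-- If `(q, x̄) →_k (q', x̄')` and `q'' ∈ GHW(k)`, then every homomorphism from
`q''` to the disjoint conjunction `q' ∧ q` yields one from `q''` to `q'`. -/
theorem statement18 (σ : Schema) (k n : ℕ) (hk : 1 ≤ k)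
    (q q' q'' : CQ σ n) (hq'' : q''.ghwLE k)
    (hgame : PebbleWin k q.atoms q.free q'.atoms q'.free)
    (hhom : HomTup q''.atoms q''.free
      (disjConj q' q).atoms (disjConj q' q).free) :
    HomTup q''.atoms q''.free q'.atoms q'.free := by
  classical
  obtain ⟨g, hgHom, hgFree⟩ := hhom
  obtain ⟨F, ⟨h0, h0F⟩, hOK, hIns, hRes⟩ := hgame
  obtain ⟨td, hwidth⟩ := hq''
  have h0ok : ∀ i, h0 (q.free i) = q'.free i := (hOK _ h0F).2.1
  -- the canonical retraction of the disjoint conjunction onto `q'`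
  have hresp : ∀ a b, djRel q' q a b → Sum.elim id h0 a = Sum.elim id h0 b := by
    rintro a b ⟨i, rfl, rfl⟩
    exact (h0ok i).symm
  set Φ : (disjConj q' q).Var → q'.Var := Quot.lift (Sum.elim id h0) hresp with hΦ
  -- width data
  have hw : ∀ t, ∃ S : Finset (Atom σ q''.Var), ↑S ⊆ q''.atoms ∧ S.card ≤ k ∧
      td.bag t ⊆ ⋃ f ∈ (S : Set (Atom σ q''.Var)), Set.range f.args := hwidth
  choose St hSt1 hSt2 hSt3 using hw
  -- the pebbled sets
  set U : td.node → Set q.Var := fun t =>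
    {u | u ∉ Set.range q.free ∧ ∃ f ∈ St t, ∃ m,
      g (f.args m) = Quot.mk (djRel q' q) (Sum.inr u)} with hU
  -- each `U t` is covered by at most `k` atoms of `q`
  have coverU : ∀ S : Finset (Atom σ q''.Var), ↑S ⊆ q''.atoms →
      ∃ Tq : Finset (Atom σ q.Var), ↑Tq ⊆ q.atoms ∧ Tq.card ≤ S.card ∧
        ∀ u : q.Var, u ∉ Set.range q.free →
          (∃ f ∈ S, ∃ m, g (f.args m) = Quot.mk (djRel q' q) (Sum.inr u)) →
          u ∈ ⋃ fq ∈ (Tq : Set (Atom σ q.Var)), Set.range fq.args := by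
    intro S
    induction S using Finset.induction_on with
    | empty =>
      intro _
      exact ⟨∅, by simp, le_refl _, by rintro u - ⟨f, hf, -⟩; simp at hf⟩
    | @insert f S hfS ih =>
      intro hsub
      have hfq : f ∈ q''.atoms := hsub (by simp)
      have hSsub : (S : Set (Atom σ q''.Var)) ⊆ q''.atoms :=
        fun x hx => hsub (by simp [hx])
      obtain ⟨Tq, hTq1, hTq2, hTq3⟩ := ih hSsub
      have hmem : Atom.map g f ∈
          (Atom.map (fun v => Quot.mk (djRel q' q) (Sum.inl v)) '' q'.atoms) ∪
          (Atom.map (fun v => Quot.mk (djRel q' q) (Sum.inr v)) '' q.atoms) :=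
        hgHom f hfq
      rcases hmem with ⟨f', hf'A, hfeq⟩ | ⟨fq, hfqA, hfeq⟩
      · -- `f` maps to the `q'` side: it contributes no pure variables
        refine ⟨Tq, hTq1, le_trans hTq2 ?_, ?_⟩
        · rw [Finset.card_insert_of_notMem hfS]; omega
        · rintro u hnf ⟨f2, hf2, m, hm⟩
          rcases Finset.mem_insert.mp hf2 with rfl | hf2
          · exfalso
            obtain ⟨R, a1, a2, he1, he2, hcomp⟩ := atom_map_eq hfeq
            subst he2
            exact hnf (djRel_inr_inl q' q u (a1 m) (hm.symm.trans (hcomp m).symm))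
          · exact hTq3 u hnf ⟨f2, hf2, m, hm⟩
      · -- `f` maps to the `q` side
        refine ⟨insert fq Tq, ?_, ?_, ?_⟩
        · intro x hx
          rcases Finset.mem_insert.mp hx with rfl | hx
          · exact hfqA
          · exact hTq1 hx
        · calc (insert fq Tq).card ≤ Tq.card + 1 := Finset.card_insert_le _ _
            _ ≤ S.card + 1 := by omega
            _ = (insert f S).card := (Finset.card_insert_of_notMem hfS).symm
        · rintro u hnf ⟨f2, hf2, m, hm⟩
          rcases Finset.mem_insert.mp hf2 with rfl | hf2
          · obtain ⟨R, a1, a2, he1, he2, hcomp⟩ := atom_map_eq hfeq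
            subst he2
            subst he1
            have huu : u = a1 m :=
              djRel_inr_inr q' q u (a1 m) hnf (hm.symm.trans (hcomp m).symm)
            exact Set.mem_biUnion
              (Finset.mem_coe.mpr (Finset.mem_insert_self _ Tq)) ⟨m, huu.symm⟩
          · have := hTq3 u hnf ⟨f2, hf2, m, hm⟩
            obtain ⟨fq', hfq', hufq'⟩ := Set.mem_iUnion₂.mp this
            exact Set.mem_biUnion
              (Finset.mem_coe.mpr (Finset.mem_insert_of_mem (Finset.mem_coe.mp hfq'))) hufq'
  have hUdata : ∀ t, kCovered k q.atoms (U t) ∧ (U t).Finite := by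
    intro t
    obtain ⟨Tq, hTq1, hTq2, hTq3⟩ := coverU (St t) (hSt1 t)
    constructor
    · exact ⟨Tq, hTq1, le_trans hTq2 (hSt2 t), fun u hu => hTq3 u hu.1 hu.2⟩
    · refine Set.Finite.subset (Set.Finite.biUnion Tq.finite_toSet
        (fun fq _ => Set.finite_range fq.args)) ?_
      exact fun u hu => hTq3 u hu.1 hu.2
  -- glue positions along the tree decomposition
  obtain ⟨pos, hposS, hposC⟩ := tree_glue td.T td.isTree
    (fun t => {p | p ∈ F ∧ p.1 = U t})
    (fun t t' p p' => ∀ u ∈ U t ∩ U t', p.2 u = p'.2 u)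
    (fun t t' p p' h u hu => (h u ⟨hu.2, hu.1⟩).symm)
    (by
      intro t
      obtain ⟨p', hp'F, hp'eq, -⟩ := pebble_extend hIns (U t) (hUdata t).1
        (hUdata t).2.toFinset (by simp) (∅, h0) h0F (by simp)
      refine ⟨p', hp'F, ?_⟩
      rw [hp'eq]
      simp)
    (by
      intro t t' hadj p hp
      obtain ⟨p1, hp1F, hp1eq, hp1ag⟩ := hRes p hp.1 (U t ∩ U t')
        (hp.2 ▸ Set.inter_subset_left)
      obtain ⟨p2, hp2F, hp2eq, hp2ag⟩ := pebble_extend hIns (U t') (hUdata t').1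
        (hUdata t').2.toFinset (by simp) p1 hp1F
        (hp1eq ▸ Set.inter_subset_right)
      refine ⟨p2, ⟨hp2F, ?_⟩, ?_⟩
      · rw [hp2eq, hp1eq]
        simp [Set.union_eq_self_of_subset_left Set.inter_subset_right]
      · intro u hu
        have h1 : p1.2 u = p.2 u := hp1ag u (hp1eq ▸ hu)
        have h2 : p2.2 u = p1.2 u := hp2ag u (hp1eq ▸ hu)
        rw [h2, h1])
  -- membership of pure lifts in the pebbled sets
  have hUloc : ∀ (v : q''.Var) (u : q.Var), u ∉ Set.range q.free →
      g v = Quot.mk (djRel q' q) (Sum.inr u) → ∀ t, v ∈ td.bag t → u ∈ U t := by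
    intro v u hnf hgv t hbag
    obtain ⟨f, hfS, hvf⟩ := Set.mem_iUnion₂.mp (hSt3 t hbag)
    obtain ⟨m, hm⟩ := hvf
    exact ⟨hnf, f, Finset.mem_coe.mp hfS, m, by rw [hm]; exact hgv⟩
  -- consistency along walks
  have hwalk : ∀ (u : q.Var) {t1 t2 : td.node} (w : td.T.Walk t1 t2),
      (∀ s ∈ w.support, u ∈ U s) → (pos t1).2 u = (pos t2).2 u := by
    intro u t1 t2 w
    induction w with
    | nil => intro _; rfl
    | @cons a b c hadj w ih =>
      intro hsup
      have h1 : u ∈ U a := hsup a (SimpleGraph.Walk.start_mem_support _)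
      have h2 : u ∈ U b := hsup b (by simp [SimpleGraph.Walk.support_cons])
      refine (hposC a b hadj u ⟨h1, h2⟩).trans (ih ?_)
      intro s hs
      exact hsup s (by simp [SimpleGraph.Walk.support_cons, hs])
  have hnodecons : ∀ (v : q''.Var) (u : q.Var), u ∉ Set.range q.free →
      g v = Quot.mk (djRel q' q) (Sum.inr u) →
      ∀ t1 t2, v ∈ td.bag t1 → v ∈ td.bag t2 →
        (pos t1).2 u = (pos t2).2 u := by
    intro v u hnf hgv t1 t2 h1 h2
    have hvE : v ∈ q''.existVars := td.bag_sub t1 h1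
    obtain ⟨iw⟩ := (td.conn v hvE).preconnected ⟨t1, h1⟩ ⟨t2, h2⟩
    obtain ⟨w, hwsup⟩ := exists_walk_of_induce_walk td.T {t | v ∈ td.bag t} iw
    exact hwalk u w (fun s hs => hUloc v u hnf hgv s (hwsup s hs))
  -- the homomorphism, by pointwise choice
  have hspec : ∀ v : q''.Var, ∃ y : q'.Var,
      (∀ w, g v = Quot.mk (djRel q' q) (Sum.inl w) → y = w) ∧
      (∀ u, u ∉ Set.range q.free → g v = Quot.mk (djRel q' q) (Sum.inr u) →
        ∀ t, v ∈ td.bag t → y = (pos t).2 u) := by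
    intro v
    by_cases hcase : (∃ u, g v = Quot.mk (djRel q' q) (Sum.inr u) ∧
        u ∉ Set.range q.free) ∧ (∃ t, v ∈ td.bag t)
    · obtain ⟨⟨u0, hu0, hu0nf⟩, t0, ht0⟩ := hcase
      refine ⟨(pos t0).2 u0, ?_, ?_⟩
      · intro w hw
        exact absurd (djRel_inr_inl q' q u0 w (hu0.symm.trans hw)) hu0nf
      · intro u hnf hgv t ht
        have huu : u = u0 := djRel_inr_inr q' q u u0 hnf (hgv.symm.trans hu0)
        rw [huu]
        exact hnodecons v u0 hu0nf hu0 t0 t ht0 ht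
    · refine ⟨Φ (g v), ?_, ?_⟩
      · intro w hw
        rw [hw, hΦ]
        rfl
      · intro u hnf hgv t ht
        exact absurd ⟨⟨u, hgv, hnf⟩, ⟨t, ht⟩⟩ hcase
  choose h2 hspec1 hspec2 using hspec
  refine ⟨h2, ?_, fun i => hspec1 _ _ (hgFree i)⟩
  -- h2 is a homomorphism
  intro f hf
  have hmem : Atom.map g f ∈
      (Atom.map (fun v => Quot.mk (djRel q' q) (Sum.inl v)) '' q'.atoms) ∪
      (Atom.map (fun v => Quot.mk (djRel q' q) (Sum.inr v)) '' q.atoms) :=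
    hgHom f hf
  rcases hmem with ⟨f', hf'A, hfeq⟩ | ⟨fq, hfqA, hfeq⟩
  · -- q'-side atom
    obtain ⟨R, a1, a2, he1, he2, hcomp⟩ := atom_map_eq hfeq
    have : Atom.map h2 f = f' := by
      rw [he1, he2]
      show (⟨R, fun m => h2 (a2 m)⟩ : Atom σ q'.Var) = ⟨R, a1⟩
      exact congrArg (Atom.mk R) (funext fun m => hspec1 (a2 m) (a1 m) (hcomp m).symm)
    rw [this]
    exact hf'A
  · -- q-side atom
    obtain ⟨R, aq, a2, he1, he2, hcomp⟩ := atom_map_eq hfeq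
    obtain ⟨tf, htf⟩ := td.covers f hf
    -- bag membership for the pure arguments
    have hbag : ∀ m, aq m ∉ Set.range q.free → a2 m ∈ td.bag tf := by
      intro m hnf
      apply htf
      constructor
      · rw [he2]; exact ⟨m, rfl⟩
      · constructor
        · exact Set.mem_biUnion hf (by rw [he2]; exact ⟨m, rfl⟩)
        · rintro ⟨i, hi⟩
          apply hnf
          have : g (a2 m) = Quot.mk (djRel q' q) (Sum.inl (q'.free i)) := by
            rw [← hi]; exact hgFree i
          exact djRel_inr_inl q' q (aq m) (q'.free i) ((hcomp m).trans this)
    have hposF : pos tf ∈ F := (hposS tf).1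
    have hposU : (pos tf).1 = U tf := (hposS tf).2
    have hOKp := (hOK _ hposF).2
    -- the image atom is a fact of q' by the game position
    have hrange : Set.range aq ⊆ (pos tf).1 ∪ Set.range q.free := by
      rintro u ⟨m, rfl⟩
      by_cases hnf : aq m ∈ Set.range q.free
      · exact Or.inr hnf
      · left
        rw [hposU]
        exact hUloc (a2 m) (aq m) hnf (hcomp m).symm tf (hbag m hnf)
    have hfqmem : Atom.map (pos tf).2 fq ∈ q'.atoms := by
      apply hOKp.2 fq hfqA
      rw [he1]
      exact hrange
    have heq : Atom.map h2 f = Atom.map (pos tf).2 fq := by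
      rw [he1, he2]
      show (⟨R, fun m => h2 (a2 m)⟩ : Atom σ q'.Var) = ⟨R, fun m => (pos tf).2 (aq m)⟩
      refine congrArg (Atom.mk R) (funext fun m => ?_)
      by_cases hnf : aq m ∈ Set.range q.free
      · obtain ⟨i, hi⟩ := hnf
        have e1 : g (a2 m) = Quot.mk (djRel q' q) (Sum.inl (q'.free i)) := by
          refine (hcomp m).symm.trans ?_
          rw [← hi]
          exact (Quot.sound ⟨i, rfl, rfl⟩).symm
        rw [hspec1 (a2 m) (q'.free i) e1, ← hi]
        exact (hOKp.1 i).symm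
      · exact hspec2 (a2 m) (aq m) hnf (hcomp m).symm tf (hbag m hnf)
    rw [heq]
    exact hfqmem
end

section
/- For each k > 1 there exists a directed graph G on nodes v_1, …, v_{k+1} such that: (1) for each 1 ≤ i < j ≤ k+1, exactly one of the edges (v_i, v_j) and (v_j, v_i) is in G; (2) the subgraph of G induced by {v_1, v_2, v_3} is a directed 3-cycle; and (3) G satisfies condition (†): for each subset B of {v_1, …, v_{k+1}} of size ℓ with 2 ≤ ℓ ≤ k−1 and each node v ∉ B, there is a node v' ∉ B with conn(v, B) ≠ conn(v', B). -/
def Egraph {n : ℕ} (i j : Fin n) : Prop :=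
  (i.val = 0 ∧ j.val ≠ 0 ∧ j.val % 2 = 1) ∨
  (i.val ≠ 0 ∧ j.val = 0 ∧ i.val % 2 = 0) ∨
  (i.val ≠ 0 ∧ j.val ≠ 0 ∧ i.val < j.val)

/-- For each `k > 1` there is a tournament `E` on nodes `v_1, …, v_{k+1}`
(formalized as `Fin (k+1)`) such that (1) between any two distinct nodes there
is exactly one directed edge, (2) the subgraph induced by the first three nodes
is a directed 3-cycle, and (3) condition (†) holds: for every set `B` of nodes
with `2 ≤ |B| ≤ k - 1` and every node `v ∉ B` there is a node `v' ∉ B` that is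
connected to some `u ∈ B` in the direction opposite to `v`. -/
theorem statement19 (k : ℕ) (hk : 1 < k) :
    ∃ E : Fin (k + 1) → Fin (k + 1) → Prop,
      (∀ i j : Fin (k + 1), i ≠ j → Xor' (E i j) (E j i)) ∧
      ((E ⟨0, by omega⟩ ⟨1, by omega⟩ ∧ E ⟨1, by omega⟩ ⟨2, by omega⟩ ∧
          E ⟨2, by omega⟩ ⟨0, by omega⟩) ∨
       (E ⟨1, by omega⟩ ⟨0, by omega⟩ ∧ E ⟨2, by omega⟩ ⟨1, by omega⟩ ∧
          E ⟨0, by omega⟩ ⟨2, by omega⟩)) ∧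
      (∀ B : Finset (Fin (k + 1)), 2 ≤ B.card → B.card ≤ k - 1 →
        ∀ v : Fin (k + 1), v ∉ B →
          ∃ v' : Fin (k + 1), v' ∉ B ∧
            ∃ u ∈ B, (E v u ∧ E u v') ∨ (E u v ∧ E v' u)) := by
  have htour : ∀ i j : Fin (k + 1), i ≠ j → Xor' (Egraph i j) (Egraph j i) := by
    intro i j hij
    have hne : i.val ≠ j.val := fun h => hij (Fin.ext h)
    unfold Xor' Xor Egraph
    omega
  refine ⟨Egraph, htour, ?_, ?_⟩
  · left
    refine ⟨?_, ?_, ?_⟩ <;> (unfold Egraph; norm_num)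
  · intro B hB2 hBk v hv
    by_contra hcon
    push_neg at hcon
    have opp : ∀ i j : Fin (k + 1), i ≠ j → ¬ Egraph i j → Egraph j i := by
      intro i j hij hE
      rcases htour i j hij with ⟨h1, _⟩ | ⟨h1, _⟩
      · exact absurd h1 hE
      · exact h1
    have key : ∀ u ∈ B, ∀ x, x ∉ B → (Egraph v u ↔ Egraph x u) := by
      intro u hu x hx
      have hxu : x ≠ u := fun h => hx (h ▸ hu)
      have hvu : v ≠ u := fun h => hv (h ▸ hu)
      have h1 := (hcon x hx u hu).1
      have h2 := (hcon x hx u hu).2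
      constructor
      · intro hE
        by_contra hxE
        exact h1 hE (opp x u hxu hxE)
      · intro hE
        by_contra hvE
        exact h2 (opp v u hvu hvE) hE
    have homog2 : ∀ u ∈ B, ∀ x y : Fin (k+1), x ∉ B → y ∉ B →
        (Egraph x u ↔ Egraph y u) := fun u hu x y hx hy =>
      (key u hu x hx).symm.trans (key u hu y hy)
    have hc2 : 1 < Bᶜ.card := by
      rw [Finset.card_compl, Fintype.card_fin]
      omega
    obtain ⟨x, hx, y, hy, hxy⟩ := Finset.one_lt_card.mp hc2
    rw [Finset.mem_compl] at hx hy
    by_cases h0 : (0 : Fin (k + 1)) ∈ B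
    · -- 0 is in B; complement is in the chain
      have main : ∀ a b : Fin (k+1), a ∉ B → b ∉ B → a.val < b.val → False := by
        intro a b ha hb hab
        have ha0 : a.val ≠ 0 := by
          intro h
          exact ha (by rwa [show a = 0 from Fin.ext (by simpa using h)])
        have hb0 : b.val ≠ 0 := by omega
        have hlt : a.val + 1 < k + 1 := by have := b.isLt; omega
        set c : Fin (k+1) := ⟨a.val + 1, hlt⟩ with hc
        have hcval : c.val = a.val + 1 := rfl
        have hcB : c ∉ B := by
          intro hcB
          have h2 := homog2 c hcB a b ha hb
          simp only [Egraph, hcval] at h2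
          omega
        have h3 := homog2 0 h0 a c ha hcB
        simp only [Egraph, Fin.val_zero, true_and, and_true, not_true, false_and, and_false, or_false, false_or, ne_eq] at h3
        omega
      rcases Nat.lt_trichotomy x.val y.val with h | h | h
      · exact main x y hx hy h
      · exact hxy (Fin.ext h)
      · exact main y x hy hx h
    · -- 0 not in B
      obtain ⟨a, ha, ha0⟩ : ∃ a : Fin (k+1), a ∉ B ∧ a.val ≠ 0 := by
        by_cases hx0 : x.val = 0
        · exact ⟨y, hy, fun h => hxy (Fin.ext (by omega))⟩
        · exact ⟨x, hx, hx0⟩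
      have hbk : ∀ b ∈ B, b.val = k := by
        intro b hb
        by_contra hbke
        have hb0 : b.val ≠ 0 := by
          intro h
          exact h0 (by rwa [show b = 0 from Fin.ext (by simpa using h)] at hb)
        have hbk' : b.val < k := by have := b.isLt; omega
        have habv : a.val ≠ b.val := fun h => ha ((Fin.ext h : a = b) ▸ hb)
        have I1 := homog2 b hb 0 a h0 ha
        simp only [Egraph, Fin.val_zero, true_and, and_true, not_true, false_and, and_false, or_false, false_or, ne_eq] at I1
        by_cases hodd : b.val % 2 = 1
        · have hab' : a.val < b.val := by omega
          have hlt : b.val + 1 < k + 1 := by omega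
          set c : Fin (k+1) := ⟨b.val + 1, hlt⟩ with hc
          have hcval : c.val = b.val + 1 := rfl
          have hcB : c ∉ B := by
            intro hcB
            have I2 := homog2 c hcB 0 a h0 ha
            simp only [Egraph, Fin.val_zero, hcval, true_and, and_true, not_true, false_and, and_false, or_false, false_or, ne_eq] at I2
            omega
          have I3 := homog2 b hb a c ha hcB
          simp only [Egraph, hcval] at I3
          omega
        · have hab' : b.val < a.val := by omega
          have hb2 : 2 ≤ b.val := by omega
          have hlt : b.val - 1 < k + 1 := by omega
          set c : Fin (k+1) := ⟨b.val - 1, hlt⟩ with hc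
          have hcval : c.val = b.val - 1 := rfl
          have hcB : c ∉ B := by
            intro hcB
            have I2 := homog2 c hcB 0 a h0 ha
            simp only [Egraph, Fin.val_zero, hcval, true_and, and_true, not_true, false_and, and_false, or_false, false_or, ne_eq] at I2
            omega
          have I3 := homog2 b hb c a hcB ha
          simp only [Egraph, hcval] at I3
          omega
      have hsub : B ⊆ {⟨k, Nat.lt_succ_self k⟩} := by
        intro b hb
        simp only [Finset.mem_singleton]
        exact Fin.ext (hbk b hb)
      have hcard := Finset.card_le_card hsub
      simp only [Finset.card_singleton] at hcard
      omega
end
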